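/- The substitution σ defined below (from the theory of stepped surfaces) is consistent on every C_σ-covered pattern of patt(S_surf) and non-overlapping on every C_σ-covered pattern of patt(S_surf). -/

import Mathlib

open scoped Classical

/-- A combinatorial substitution on alphabet `A` with vectors in `V`:
a base rule sending each letter to a pattern, together with a deterministic
finite set of concatenation rules.  `rule t t' u = some v` encodes the
concatenation rule `(t, t', u) ↦ v`. -/
structure Subst (A : Type*) (V : Type*) [AddCommGroup V] where
  /-- the base rule -/
  base : A → Finset (V × A)
  /-- the image of a letter is a pattern: its cells have distinct vectors -/
  basePat : ∀ t : A, ∀ c ∈ base t, ∀ c' ∈ base t, c.1 = c'.1 → c = c'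
  /-- the concatenation rules, as a partial function -/
  rule : A → A → V → Option V
  /-- there are finitely many concatenation rules -/
  finiteRules : {u : V | ∃ t t', rule t t' u ≠ none}.Finite
  /-- determinism: no two rules with left-hand sides `(t,t',u)` and `(t,t',-u)` -/
  det : ∀ t t' u, (rule t t' u).isSome → (rule t t' (-u)).isSome → u = -u

/-- A pattern is a finite set of cells with pairwise distinct vectors. -/
def IsPattern {V A : Type*} (P : Finset (V × A)) : Prop :=
  ∀ c ∈ P, ∀ c' ∈ P, c.1 = c'.1 → c = c'

namespace Subst

variable {A V : Type*} [AddCommGroup V]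

/-- `σ_rule(c, c')`: the relative position of the images of the two cells
`c`, `c'`, when some concatenation rule applies to them. -/
def ruleVec (σ : Subst A V) (c c' : V × A) : Option V :=
  match σ.rule c.2 c'.2 (c'.1 - c.1) with
  | some v => some v
  | none => (σ.rule c'.2 c.2 (c.1 - c'.1)).map (fun v => -v)

/-- The image vector `ω_σ(γ)` of a path `γ`. -/
def omega (σ : Subst A V) (γ : List (V × A)) : V :=
  ((γ.zip γ.tail).map (fun p => (σ.ruleVec p.1 p.2).getD 0)).sum

/-- A `C_σ`-path: a nonempty sequence of cells in which any two consecutive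
cells form a translated copy of a starting pattern of `σ`, and any two cells
with the same vector are equal. -/
def IsPath (σ : Subst A V) (γ : List (V × A)) : Prop :=
  γ ≠ [] ∧ γ.Chain' (fun c c' => (σ.ruleVec c c').isSome) ∧
    ∀ c ∈ γ, ∀ c' ∈ γ, c.1 = c'.1 → c = c'

/-- A `C_σ`-path of the pattern `P`. -/
def IsPathOf (σ : Subst A V) (P : Finset (V × A)) (γ : List (V × A)) : Prop :=
  σ.IsPath γ ∧ ∀ c ∈ γ, c ∈ P

/-- A `C_σ`-loop of the pattern `P`. -/
def IsLoopOf (σ : Subst A V) (P : Finset (V × A)) (γ : List (V × A)) : Prop :=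
  σ.IsPathOf P γ ∧ γ.head? = γ.getLast?

/-- `P` is `C_σ`-covered: any two of its cells are joined by a `C_σ`-path of `P`. -/
def Covered (σ : Subst A V) (P : Finset (V × A)) : Prop :=
  ∀ c ∈ P, ∀ c' ∈ P,
    ∃ γ, σ.IsPathOf P γ ∧ γ.head? = some c ∧ γ.getLast? = some c'

/-- `σ` is consistent on `P`: any two `C_σ`-paths of `P` with the same first
and last cells have the same image vector. -/
def ConsistentOn (σ : Subst A V) (P : Finset (V × A)) : Prop :=
  ∀ γ γ' : List (V × A), σ.IsPathOf P γ → σ.IsPathOf P γ' →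
    γ.head? = γ'.head? → γ.getLast? = γ'.getLast? → σ.omega γ = σ.omega γ'

/-- `σ` is consistent: it is consistent on every `C_σ`-covered pattern. -/
def Consistent (σ : Subst A V) : Prop :=
  ∀ P : Finset (V × A), IsPattern P → σ.Covered P → σ.ConsistentOn P

/-- The support of the image of a letter. -/
noncomputable def supp (σ : Subst A V) (t : A) : Finset V :=
  (σ.base t).image Prod.fst

/-- `σ` is non-overlapping on `P`: the images of two distinct cells of `P`
joined by a `C_σ`-path of `P` have disjoint supports. -/
def NonOverlappingOn (σ : Subst A V) (P : Finset (V × A)) : Prop :=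
  ∀ c ∈ P, ∀ c' ∈ P, c ≠ c' → ∀ γ, σ.IsPathOf P γ →
    γ.head? = some c → γ.getLast? = some c' →
    ∀ b ∈ σ.supp c'.2, σ.omega γ + b ∉ σ.supp c.2

/-- `σ` is non-overlapping: it is non-overlapping on every `C_σ`-covered pattern. -/
def NonOverlapping (σ : Subst A V) : Prop :=
  ∀ P : Finset (V × A), IsPattern P → σ.Covered P → σ.NonOverlappingOn P

end Subst

/-- The three-letter alphabet `{1, 2, 3}`. -/
inductive L : Type where
  | l1 : L
  | l2 : L
  | l3 : L
deriving DecidableEq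

instance : Fintype L :=
  ⟨⟨{L.l1, L.l2, L.l3}, by decide⟩, fun x => by cases x <;> decide⟩

open L

/-- The horizontal concatenation rules `(t, t', (1,0)) ↦ v`. -/
def hruleS : L → L → Option (ℤ × ℤ)
  | l1, l1 => some (0, 2)
  | l1, l2 => some (0, 2)
  | l1, l3 => some (0, 2)
  | l2, l1 => some (0, 1)
  | l2, l2 => some (0, 1)
  | l2, l3 => none
  | l3, l1 => some (0, 1)
  | l3, l2 => some (0, 1)
  | l3, l3 => some (0, 1)

/-- The vertical concatenation rules `(t, t', (0,1)) ↦ v`. -/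
def vruleS : L → L → Option (ℤ × ℤ)
  | l1, l1 => some (-1, -1)
  | l1, l2 => some (-1, 0)
  | l1, l3 => some (-1, 0)
  | l2, l1 => some (-1, -1)
  | l2, l2 => some (-1, 0)
  | l2, l3 => some (-1, 0)
  | l3, l1 => none
  | l3, l2 => some (-1, -1)
  | l3, l3 => some (-1, -1)

/-- The substitution of Example `mini`, coming from the theory of stepped
surfaces:
`1 ↦ {[(0,0),2], [(0,1),1]}`, `2 ↦ {[(0,0),3]}`, `3 ↦ {[(0,0),1]}`,
with the sixteen concatenation rules `hruleS` and `vruleS`. -/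
noncomputable def sigmaS : Subst L (ℤ × ℤ) where
  base t :=
    match t with
    | l1 => {((0, 0), l2), ((0, 1), l1)}
    | l2 => {((0, 0), l3)}
    | l3 => {((0, 0), l1)}
  basePat := by rintro (_ | _ | _) <;> simp <;> decide
  rule t t' u :=
    if u = ((1 : ℤ), (0 : ℤ)) then hruleS t t'
    else if u = ((0 : ℤ), (1 : ℤ)) then vruleS t t' else none
  finiteRules := by
    apply Set.Finite.subset
      ((Set.finite_singleton (((0 : ℤ), (1 : ℤ)) : ℤ × ℤ)).insert
        (((1 : ℤ), (0 : ℤ)) : ℤ × ℤ))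
    rintro u ⟨t, t', h⟩
    try simp only at h
    split_ifs at h with h1 h2
    · exact Set.mem_insert_iff.2 (Or.inl h1)
    · exact Set.mem_insert_iff.2 (Or.inr h2)
    · exact absurd rfl h
  det := by
    intro t t' u h1 h2
    exfalso
    try simp only at h1 h2
    have hu : u = ((1 : ℤ), (0 : ℤ)) ∨ u = ((0 : ℤ), (1 : ℤ)) := by
      split_ifs at h1 with hA hB
      · exact Or.inl hA
      · exact Or.inr hB
      · simp at h1
    have hnu : -u = ((1 : ℤ), (0 : ℤ)) ∨ -u = ((0 : ℤ), (1 : ℤ)) := by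
      split_ifs at h2 with hC hD
      · exact Or.inl hC
      · exact Or.inr hD
      · simp at h2
    rcases hu with rfl | rfl <;> rcases hnu with h | h <;> revert h <;> decide

/-- The 28 allowed `2 × 2` patterns, written
(bottom-left, bottom-right, top-left, top-right). -/
def allowedSurf : List (L × L × L × L) :=
  [(l1, l1, l1, l1), (l1, l1, l2, l1), (l1, l1, l3, l1),
   (l1, l2, l1, l1), (l1, l2, l2, l1), (l1, l2, l3, l1),
   (l1, l3, l1, l2), (l1, l3, l1, l3), (l1, l3, l2, l2),
   (l1, l3, l3, l2), (l1, l3, l3, l3),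
   (l2, l1, l1, l2), (l2, l1, l1, l3), (l2, l1, l2, l2),
   (l2, l1, l3, l2), (l2, l1, l3, l3),
   (l2, l2, l1, l2), (l2, l2, l1, l3), (l2, l2, l2, l2),
   (l2, l2, l3, l2), (l2, l2, l3, l3),
   (l3, l1, l2, l1), (l3, l1, l3, l1),
   (l3, l2, l2, l1), (l3, l2, l3, l1),
   (l3, l3, l2, l2), (l3, l3, l3, l2), (l3, l3, l3, l3)]

/-- The set of configurations whose `2 × 2` sub-patterns are all allowed:
codings of stepped surfaces. -/
def Ssurf : Set ((ℤ × ℤ) → L) :=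
  {x | ∀ v : ℤ × ℤ, (x v, x (v + (1, 0)), x (v + (0, 1)), x (v + (1, 1))) ∈ allowedSurf}

/-- The pattern `P` appears in the configuration `x` (up to a translation). -/
def AppearsIn (x : (ℤ × ℤ) → L) (P : Finset ((ℤ × ℤ) × L)) : Prop :=
  ∃ w : ℤ × ℤ, ∀ c ∈ P, x (c.1 + w) = c.2

/-- The pattern `P` appears in some configuration of `S`. -/
def AppearsInSys (S : Set ((ℤ × ℤ) → L)) (P : Finset ((ℤ × ℤ) × L)) : Prop :=
  ∃ x ∈ S, AppearsIn x P

/-! The concatenation rules of `σ` are the increments of a potential: for `x ∈ S_surf` there is a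
height function `φ : ℤ² → ℤ` that grows by `|σ(t)|` when stepping right from a cell of type `t`
(and by `vStep` when stepping up): these increments commute around every allowed `2 × 2`
pattern. Every concatenation rule applied to cells of `x` at `u` and `u'` is then
`Φ u' - Φ u` for `Φ u = (-u₂, φ u)`, so the image vector of a path telescopes, which gives
consistency. The image of the cell at `u` occupies the segment `[φ u, φ (u + (1,0)))` of
column `-u₂`, and along a row these segments are consecutive, hence disjoint. -/

namespace Subst

variable {A V : Type*} [AddCommGroup V] {σ : Subst A V}

theorem omega_cons_cons (σ : Subst A V) (a b : V × A) (l : List (V × A)) :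
    σ.omega (a :: b :: l) = (σ.ruleVec a b).getD 0 + σ.omega (b :: l) := by
  simp [omega]

theorem omega_eq_sub_of_isChain {F : V × A → V} {γ : List (V × A)}
    (hγ : γ.IsChain fun c c' => σ.ruleVec c c' = some (F c' - F c))
    {c c' : V × A} (hc : γ.head? = some c) (hc' : γ.getLast? = some c') :
    σ.omega γ = F c' - F c := by
  induction γ generalizing c with
  | nil => simp at hc
  | cons a l ih =>
    obtain rfl : a = c := by simpa using hc
    cases l with
    | nil =>
      obtain rfl : a = c' := by simpa using hc'
      simp [omega]
    | cons b l =>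
      rw [List.isChain_cons_cons] at hγ
      rw [omega_cons_cons, hγ.1, Option.getD_some,
        ih hγ.2 rfl (by simpa [List.getLast?_cons_cons] using hc')]
      abel

def IsPotential (σ : Subst A V) (x : V → A) (Φ : V → V) : Prop :=
  ∀ u d v, σ.rule (x u) (x (u + d)) d = some v → v = Φ (u + d) - Φ u

variable {x : V → A} {Φ : V → V} {w : V}

theorem IsPotential.rule_eq_sub (hΦ : σ.IsPotential x Φ) {c c' : V × A}
    (hc : x (c.1 + w) = c.2) (hc' : x (c'.1 + w) = c'.2) {v : V}
    (h : σ.rule c.2 c'.2 (c'.1 - c.1) = some v) : v = Φ (c'.1 + w) - Φ (c.1 + w) := by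
  have hpos : c.1 + w + (c'.1 - c.1) = c'.1 + w := by abel
  rw [← hc, ← hc', ← hpos] at h
  rw [hΦ _ _ _ h, hpos]

theorem IsPotential.ruleVec_eq_sub (hΦ : σ.IsPotential x Φ) {c c' : V × A}
    (hc : x (c.1 + w) = c.2) (hc' : x (c'.1 + w) = c'.2) (h : (σ.ruleVec c c').isSome) :
    σ.ruleVec c c' = some (Φ (c'.1 + w) - Φ (c.1 + w)) := by
  unfold ruleVec at h ⊢
  cases hr : σ.rule c.2 c'.2 (c'.1 - c.1) with
  | some v => rw [hΦ.rule_eq_sub hc hc' hr]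
  | none =>
    rw [hr] at h
    obtain ⟨v, hv⟩ := Option.isSome_iff_exists.1 (Option.isSome_map.symm.trans h)
    simp [hv, hΦ.rule_eq_sub hc' hc hv]

variable {P : Finset (V × A)}

theorem IsPotential.omega_eq_sub (hΦ : σ.IsPotential x Φ) (hw : ∀ c ∈ P, x (c.1 + w) = c.2)
    {γ : List (V × A)} (hγ : σ.IsPathOf P γ) {c c' : V × A}
    (hc : γ.head? = some c) (hc' : γ.getLast? = some c') :
    σ.omega γ = Φ (c'.1 + w) - Φ (c.1 + w) :=
  omega_eq_sub_of_isChain (F := fun c => Φ (c.1 + w))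
    (List.IsChain.imp_of_mem_imp (fun a b ha hb hab =>
      hΦ.ruleVec_eq_sub (hw a (hγ.2 a ha)) (hw b (hγ.2 b hb)) hab) hγ.1.2.1) hc hc'

theorem IsPotential.consistentOn (hΦ : σ.IsPotential x Φ)
    (hw : ∀ c ∈ P, x (c.1 + w) = c.2) : σ.ConsistentOn P := by
  intro γ γ' hγ hγ' hhead hlast
  obtain ⟨c, hc⟩ := Option.isSome_iff_exists.1 (List.isSome_head?.2 hγ.1.1)
  obtain ⟨c', hc'⟩ := Option.isSome_iff_exists.1 (List.getLast?_isSome.2 hγ.1.1)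
  rw [hΦ.omega_eq_sub hw hγ hc hc', hΦ.omega_eq_sub hw hγ' (hhead ▸ hc) (hlast ▸ hc')]

theorem IsPotential.nonOverlappingOn (hP : IsPattern P) (hΦ : σ.IsPotential x Φ)
    (hw : ∀ c ∈ P, x (c.1 + w) = c.2)
    (hdisj : ∀ u u', u ≠ u' → ∀ a ∈ σ.supp (x u), ∀ b ∈ σ.supp (x u'), Φ u + a ≠ Φ u' + b) :
    σ.NonOverlappingOn P := by
  intro c hc c' hc' hne γ hγ hhead hlast b hb ha
  rw [hΦ.omega_eq_sub hw hγ hhead hlast] at ha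
  have hu : c.1 + w ≠ c'.1 + w := fun h => hne (hP c hc c' hc' (add_right_cancel h))
  refine hdisj _ _ hu _ (by rwa [hw c hc]) b (by rwa [hw c' hc']) ?_
  abel

end Subst

theorem exists_add_one_eq_add {G : Type*} [AddCommGroup G] (h : ℤ → G) :
    ∃ S : ℤ → G, S 0 = 0 ∧ ∀ m, S (m + 1) = S m + h m := by
  refine ⟨fun m => ∑ i ∈ Finset.Ico 0 m, h i - ∑ i ∈ Finset.Ico m 0, h i, by simp, fun m => ?_⟩
  dsimp only
  rcases le_or_gt 0 m with hm | hm
  · rw [← Finset.sum_Ico_add_eq_sum_Ico_add_one hm, Finset.Ico_eq_empty_of_le hm,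
      Finset.Ico_eq_empty_of_le (by omega : (0 : ℤ) ≤ m + 1)]
    simp
  · rw [Finset.Ico_eq_empty_of_le hm.le, Finset.Ico_eq_empty_of_le (by omega),
      ← Finset.insert_Ico_add_one_left_eq_Ico hm, Finset.sum_insert (by simp)]
    abel

theorem exists_potential_of_comm {G : Type*} [AddCommGroup G] (f g : ℤ × ℤ → G)
    (hfg : ∀ u, f u + g (u + (1, 0)) = g u + f (u + (0, 1))) :
    ∃ φ : ℤ × ℤ → G,
      (∀ u, φ (u + (1, 0)) = φ u + f u) ∧ (∀ u, φ (u + (0, 1)) = φ u + g u) := by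
  choose S hS0 hS using fun n : ℤ => exists_add_one_eq_add fun m => f (m, n)
  obtain ⟨T, -, hT⟩ := exists_add_one_eq_add fun n => g (0, n)
  refine ⟨fun u => S u.2 u.1 + T u.2, fun ⟨m, n⟩ => ?_, fun ⟨m, n⟩ => ?_⟩
  · simp only [Prod.mk_add_mk, add_zero, hS]
    abel
  · have hper : Function.Periodic (fun m => S (n + 1) m - S n m - g (m, n)) 1 := fun m => by
      have := hfg (m, n)
      simp only [Prod.mk_add_mk, add_zero] at this ⊢
      rw [hS, hS]
      linear_combination (norm := module) -this
    have := hper.zsmul_eq m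
    simp only [smul_eq_mul, mul_one, hS0] at this
    simp only [Prod.mk_add_mk, add_zero, hT]
    linear_combination (norm := module) this

theorem Monotone.eq_of_mem_Ico {α : Type*} [Preorder α] {f : ℤ → α} (hf : Monotone f)
    {m m' : ℤ} {y : α} (h : y ∈ Set.Ico (f m) (f (m + 1)))
    (h' : y ∈ Set.Ico (f m') (f (m' + 1))) : m = m' := by
  by_contra hne
  rcases lt_or_gt_of_ne hne with hlt | hlt
  · exact (h.2.trans_le ((hf (Int.add_one_le_of_lt hlt)).trans h'.1)).false
  · exact (h'.2.trans_le ((hf (Int.add_one_le_of_lt hlt)).trans h.1)).false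

/-- The length `|σ(t)|` of the column `σ(t)`. -/
def hStep : L → ℤ
  | l1 => 2
  | l2 => 1
  | l3 => 1

def vStep : L → L → ℤ
  | l1, l1 => -1
  | l1, l2 => 0
  | l1, l3 => 0
  | l2, l1 => -1
  | l2, l2 => 0
  | l2, l3 => 0
  | l3, l1 => 0
  | l3, l2 => -1
  | l3, l3 => -1

theorem hruleS_eq_some {t t' : L} {v : ℤ × ℤ} (h : hruleS t t' = some v) : v = (0, hStep t) := by
  cases t <;> cases t' <;> simp_all [hruleS, hStep]

theorem vruleS_eq_some {t t' : L} {v : ℤ × ℤ} (h : vruleS t t' = some v) :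
    v = (-1, vStep t t') := by
  cases t <;> cases t' <;> simp_all [vruleS, vStep]

theorem hStep_add_vStep_of_mem_allowedSurf {a b c d : L} (h : (a, b, c, d) ∈ allowedSurf) :
    hStep a + vStep b d = vStep a c + hStep c := by
  revert a b c d; decide

theorem exists_height_of_mem_Ssurf {x : ℤ × ℤ → L} (hx : x ∈ Ssurf) :
    ∃ φ : ℤ × ℤ → ℤ, (∀ u, φ (u + (1, 0)) = φ u + hStep (x u)) ∧
      ∀ u, φ (u + (0, 1)) = φ u + vStep (x u) (x (u + (0, 1))) :=
  exists_potential_of_comm _ _ fun u => by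
    have h := hStep_add_vStep_of_mem_allowedSurf (hx u)
    rwa [show u + (1, 1) = u + (1, 0) + (0, 1) by simp [add_assoc]] at h

theorem sigmaS_rule_eq_some {t t' : L} {d v : ℤ × ℤ} (h : sigmaS.rule t t' d = some v) :
    d = (1, 0) ∧ v = (0, hStep t) ∨ d = (0, 1) ∧ v = (-1, vStep t t') := by
  simp only [sigmaS] at h
  split_ifs at h with h1 h2
  · exact Or.inl ⟨h1, hruleS_eq_some h⟩
  · exact Or.inr ⟨h2, vruleS_eq_some h⟩

theorem sigmaS_isPotential {x : ℤ × ℤ → L} {φ : ℤ × ℤ → ℤ}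
    (hφh : ∀ u, φ (u + (1, 0)) = φ u + hStep (x u))
    (hφv : ∀ u, φ (u + (0, 1)) = φ u + vStep (x u) (x (u + (0, 1)))) :
    sigmaS.IsPotential x fun u => (-u.2, φ u) := by
  intro u d v h
  rcases sigmaS_rule_eq_some h with ⟨rfl, rfl⟩ | ⟨rfl, rfl⟩
  · simp [hφh]
  · simp [hφv]

theorem mem_supp_sigmaS {t : L} {b : ℤ × ℤ} :
    b ∈ sigmaS.supp t ↔ b.1 = 0 ∧ 0 ≤ b.2 ∧ b.2 < hStep t := by
  obtain ⟨b1, b2⟩ := b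
  cases t <;> simp [Subst.supp, sigmaS, hStep] <;> omega

theorem sigmaS_images_disjoint {x : ℤ × ℤ → L} {φ : ℤ × ℤ → ℤ}
    (hφh : ∀ u, φ (u + (1, 0)) = φ u + hStep (x u)) {u u' : ℤ × ℤ} (hne : u ≠ u')
    {a b : ℤ × ℤ} (ha : a ∈ sigmaS.supp (x u)) (hb : b ∈ sigmaS.supp (x u')) :
    (-u.2, φ u) + a ≠ (-u'.2, φ u') + b := by
  obtain ⟨m, n⟩ := u
  obtain ⟨m', n'⟩ := u'
  obtain ⟨a₁, a₂⟩ := a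
  obtain ⟨b₁, b₂⟩ := b
  rw [mem_supp_sigmaS] at ha hb
  intro heq
  simp only [Prod.mk_add_mk, Prod.mk.injEq] at heq
  obtain rfl : n = n' := by omega
  have hrow : ∀ k, φ (k + 1, n) = φ (k, n) + hStep (x (k, n)) := fun k => by
    simpa using hφh (k, n)
  have hmono : Monotone fun k => φ (k, n) :=
    monotone_int_of_le_succ fun k => by cases h : x (k, n) <;> simp [hrow, h, hStep]
  refine hne (Prod.ext (hmono.eq_of_mem_Ico (y := φ (m, n) + a₂) ?_ ?_) rfl)
  · simp only [Set.mem_Ico, hrow]; omega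
  · simp only [Set.mem_Ico, hrow]; omega

/-- Proposition `mini`.  The stepped-surface substitution
`σ` is consistent and non-overlapping on every `C_σ`-covered pattern of
`patt(S_surf)`. -/
theorem sigmaS_consistent_and_nonOverlapping :
    ∀ P : Finset ((ℤ × ℤ) × L), IsPattern P → AppearsInSys Ssurf P →
      sigmaS.Covered P → sigmaS.ConsistentOn P ∧ sigmaS.NonOverlappingOn P := by
  rintro P hP ⟨x, hx, w, hw⟩ -
  obtain ⟨φ, hφh, hφv⟩ := exists_height_of_mem_Ssurf hx
  have hΦ := sigmaS_isPotential hφh hφv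
  exact ⟨hΦ.consistentOn hw, hΦ.nonOverlappingOn hP hw fun _ _ hne _ ha _ hb =>
    sigmaS_images_disjoint hφh hne ha hb⟩
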